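/- A 1-cut search tree on a tree G is exactly a rooting of G: if T is a search tree on G in which every node v satisfies |∂(T_v)| ≤ 1, then for every non-root node v, the parent of v in T is adjacent to v in G. -/

import Mathlib

/-!
Follow the recursive construction of the search tree. A child `c` of a node `r` built on a
connected set `S` is the root of a search tree on a component `C` of `S \ {r}`, and `T_c = C`.
As `S` is connected, some `x ∈ C` is adjacent to `r`. If `x ≠ c`, then `x` lies in the subtree
`T_d` of a child `d` of `c`, built on a component of `C \ {c}`; since `C` is connected, both `r`
and `c` then lie in `∂(T_d)`, which contradicts the 1-cut property. Hence `x = c`.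
-/

open SimpleGraph

variable {V : Type*}

/-- Reachability within a vertex set `S`. -/
def reachIn (G : SimpleGraph V) (S : Set V) : V → V → Prop :=
  Relation.ReflTransGen (fun x y => x ∈ S ∧ y ∈ S ∧ G.Adj x y)

/-- The connected component of `v` inside the vertex set `S`. -/
def compIn (G : SimpleGraph V) (S : Set V) (v : V) : Set V :=
  {u | reachIn G S v u}

/-- `IsSearchTree G par S r`: the parent map `par` describes a search tree with root `r`
on the part of `G` induced by `S`, built recursively: the root `r` is chosen, and each
connected component of `S \ {r}` carries a search tree whose root is a child of `r`. -/
inductive IsSearchTree (G : SimpleGraph V) (par : V → Option V) : Set V → V → Prop where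
  | node (S : Set V) (r : V) (ρ : V → V) (hr : r ∈ S)
      (hρ : ∀ v ∈ S, v ≠ r → par (ρ v) = some r)
      (h : ∀ v ∈ S, v ≠ r → IsSearchTree G par (compIn G (S \ {r}) v) (ρ v)) :
      IsSearchTree G par S r

/-- `isAnc par a v`: `a` is an ancestor of `v` (reflexively). -/
def isAnc (par : V → Option V) (a v : V) : Prop :=
  Relation.ReflTransGen (fun x y => par x = some y) v a

/-- The subtree rooted at `v`: all descendants of `v` (including `v`). -/
def subtree (par : V → Option V) (v : V) : Set V := {u | isAnc par v u}

/-- The outer boundary `∂(T_v)` of the subtree rooted at `v`. -/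
def bdry (G : SimpleGraph V) (par : V → Option V) (v : V) : Set V :=
  {x | x ∉ subtree par v ∧ ∃ u ∈ subtree par v, G.Adj x u}

/-- A search tree is 2-cut if every subtree boundary has size at most 2. -/
def TwoCut (G : SimpleGraph V) (par : V → Option V) : Prop :=
  ∀ v, (bdry G par v).ncard ≤ 2

open Classical in
/-- The STT rotation of `v` with its parent `p`: `p` becomes a child of `v`, `v` takes the
former parent of `p`, and any child `c` of `v` with `p ∈ ∂(T_c)` is reattached to `p`. -/
noncomputable def rotate (G : SimpleGraph V) (par : V → Option V) (v p : V) :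
    V → Option V := fun x =>
  if x = v then par p
  else if x = p then some v
  else if par x = some v ∧ p ∈ bdry G par x then some p
  else par x

/-- A splay step at `x`: a single rotation if `x` has no grandparent; a ZIG-ZAG
(two rotations at `x`) if `x` is a separator; a ZIG-ZIG (rotation at the parent,
then at `x`) otherwise. -/
noncomputable def splayStep (G : SimpleGraph V) (par : V → Option V) (x : V) :
    V → Option V :=
  match par x with
  | none => par
  | some p =>
    match par p with
    | none => rotate G par x p
    | some g =>
      if (bdry G par x).ncard = 2 then
        rotate G (rotate G par x p) x g
      else
        rotate G (rotate G par p g) x p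

def PreconnectedIn (G : SimpleGraph V) (S : Set V) : Prop :=
  ∀ x ∈ S, ∀ y ∈ S, reachIn G S x y

/-- The invariant of the recursion: it forces the set on which a search tree with root `r` is
built to be exactly the subtree `T_r` (`IsSearchTree.subtree_eq`). -/
def ChildClosed (par : V → Option V) (S : Set V) (r : V) : Prop :=
  (∀ u w, par u = some w → w ∈ S → u ∈ S) ∧ ∀ w ∈ S, par r ≠ some w

variable {G : SimpleGraph V} {par : V → Option V} {S C : Set V} {r v : V}

lemma reachIn_symm {x y : V} (h : reachIn G S x y) : reachIn G S y x := by
  induction h with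
  | refl => exact Relation.ReflTransGen.refl
  | tail _ hbc ih => exact ih.head ⟨hbc.2.1, hbc.1, hbc.2.2.symm⟩

lemma mem_compIn_self (G : SimpleGraph V) (S : Set V) (v : V) : v ∈ compIn G S v :=
  Relation.ReflTransGen.refl

lemma compIn_subset (hv : v ∈ S) : compIn G S v ⊆ S := by
  intro u hu
  induction hu with
  | refl => exact hv
  | tail _ hbc _ => exact hbc.2.1

lemma compIn_sdiff_subset (hv : v ∈ S) (hvr : v ≠ r) : compIn G (S \ {r}) v ⊆ S \ {r} :=
  compIn_subset (Set.mem_sdiff_singleton.2 ⟨hv, hvr⟩)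

lemma notMem_compIn_sdiff (hvr : v ≠ r) : r ∉ compIn G (S \ {r}) v := by
  intro h
  rcases Relation.ReflTransGen.cases_tail h with h | ⟨_, _, hstep⟩
  · exact hvr h.symm
  · exact hstep.2.1.2 rfl

lemma reachIn_compIn {x : V} (h : reachIn G S v x) : reachIn G (compIn G S v) v x := by
  induction h with
  | refl => exact Relation.ReflTransGen.refl
  | tail hab hbc ih => exact ih.tail ⟨hab, hab.tail hbc, hbc.2.2⟩

lemma preconnectedIn_compIn (G : SimpleGraph V) (S : Set V) (v : V) :
    PreconnectedIn G (compIn G S v) :=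
  fun _ hx _ hy => (reachIn_symm (reachIn_compIn hx)).trans (reachIn_compIn hy)

lemma preconnectedIn_univ (hG : G.Preconnected) : PreconnectedIn G Set.univ :=
  fun x _ y _ => Relation.ReflTransGen.mono (fun _ _ h => ⟨trivial, trivial, h⟩) _ _
    ((reachable_iff_reflTransGen x y).1 (hG x y))

lemma PreconnectedIn.exists_adj_compIn (hS : PreconnectedIn G S) (hr : r ∈ S) (hv : v ∈ S)
    (hvr : v ≠ r) : ∃ x ∈ compIn G (S \ {r}) v, G.Adj r x := by
  suffices key : ∀ y, reachIn G S y r → y ≠ r →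
      ∃ x ∈ compIn G (S \ {r}) y, G.Adj r x from key v (hS v hv r hr) hvr
  intro y hy
  induction hy using Relation.ReflTransGen.head_induction_on with
  | refl => exact fun h => absurd rfl h
  | @head y z hyz _ ih =>
    intro hyr
    by_cases hzr : z = r
    · exact ⟨y, mem_compIn_self G _ y, hzr ▸ hyz.2.2.symm⟩
    · obtain ⟨x, hx, hrx⟩ := ih hzr
      exact ⟨x, Relation.ReflTransGen.head ⟨⟨hyz.1, hyr⟩, ⟨hyz.2.1, hzr⟩, hyz.2.2⟩ hx,
        hrx⟩

lemma subtree_subset {t : V} (ht : t ∈ C) (hC : ∀ u w, par u = some w → w ∈ C → u ∈ C) :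
    subtree par t ⊆ C := by
  intro u hu
  induction hu using Relation.ReflTransGen.head_induction_on with
  | refl => exact ht
  | head hstep _ ih => exact hC _ _ hstep ih

namespace IsSearchTree

lemma root_mem (hT : IsSearchTree G par S r) : r ∈ S := by
  cases hT with
  | node _ _ _ hr _ _ => exact hr

lemma subset_subtree (hT : IsSearchTree G par S r) : S ⊆ subtree par r := by
  induction hT with
  | node S r ρ _ hρ _ ih =>
    intro u hu
    by_cases hur : u = r
    · exact hur ▸ Relation.ReflTransGen.refl
    · exact (ih u hu hur (mem_compIn_self G _ u)).tail (hρ u hu hur)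

lemma subtree_eq (hT : IsSearchTree G par S r)
    (hS : ∀ u w, par u = some w → w ∈ S → u ∈ S) : subtree par r = S :=
  (subtree_subset hT.root_mem hS).antisymm hT.subset_subtree

lemma parent_mem_compIn (hT : IsSearchTree G par S r) {u w : V} (hu : u ∈ S) (hur : u ≠ r)
    (huw : par u = some w) (hwr : w ≠ r) : w ∈ compIn G (S \ {r}) u := by
  induction hT with
  | node S r ρ _ hρ hsub ih =>
    by_cases huρ : u = ρ u
    · rw [huρ, hρ u hu hur] at huw
      exact absurd (Option.some.inj huw).symm hwr
    by_cases hwρ : w = ρ u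
    · exact hwρ ▸ (hsub u hu hur).root_mem
    · exact (compIn_sdiff_subset (mem_compIn_self G _ u) huρ
        (ih u hu hur (mem_compIn_self G _ u) huρ hwρ)).1

lemma eq_root_of_parent_notMem (hT : IsSearchTree G par S r) {u w : V} (hu : u ∈ S)
    (huw : par u = some w) (hw : w ∉ S) : u = r := by
  by_contra hur
  by_cases hwr : w = r
  · exact hw (hwr ▸ hT.root_mem)
  · exact hw (compIn_sdiff_subset hu hur
    (hT.parent_mem_compIn hu hur huw hwr)).1

lemma childClosed_compIn (hT : IsSearchTree G par S r) (hS : ChildClosed par S r) (hv : v ∈ S)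
    (hvr : v ≠ r) {c : V} (hc : par c = some r) : ChildClosed par (compIn G (S \ {r}) v) c := by
  have hCsub := compIn_sdiff_subset (G := G) hv hvr
  refine ⟨fun u w huw hw => ?_, fun w hw hcw => ?_⟩
  · have hwS := hCsub hw
    have hu : u ∈ S := hS.1 u w huw hwS.1
    have hur : u ≠ r := by
      rintro rfl
      exact hS.2 w hwS.1 huw
    exact hw.trans (reachIn_symm (hT.parent_mem_compIn hu hur huw hwS.2))
  · rw [hc, Option.some.injEq] at hcw
    subst hcw
    exact notMem_compIn_sdiff hvr hw

lemma eq_root_of_adj [Finite V] (h1 : ∀ x, (bdry G par x).ncard ≤ 1)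
    (hT : IsSearchTree G par C v) (hC : ChildClosed par C v) (hconn : PreconnectedIn G C)
    {a x : V} (ha : a ∉ C) (hx : x ∈ C) (hax : G.Adj a x) : x = v := by
  by_contra hxv
  cases hT with
  | node _ _ ρ hv hρ hsub =>
    have hT' : IsSearchTree G par C v := .node C v ρ hv hρ hsub
    set C' := compIn G (C \ {v}) x
    have hC'sub : C' ⊆ C \ {v} := compIn_sdiff_subset hx hxv
    have hsubtree : subtree par (ρ x) = C' :=
      (hsub x hx hxv).subtree_eq (hT'.childClosed_compIn hC hx hxv (hρ x hx hxv)).1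
    have haB : a ∈ bdry G par (ρ x) :=
      ⟨fun h => ha (hC'sub (hsubtree ▸ h)).1, x, hsubtree ▸ mem_compIn_self G _ x, hax⟩
    obtain ⟨y, hy, hvy⟩ := hconn.exists_adj_compIn hv hx hxv
    have hvB : v ∈ bdry G par (ρ x) :=
      ⟨fun h => (hC'sub (hsubtree ▸ h)).2 rfl, y, hsubtree ▸ hy, hvy⟩
    exact ha (((Set.ncard_le_one_iff).1 (h1 (ρ x)) haB hvB) ▸ hv)

lemma adj_of_parent_mem [Finite V] (h1 : ∀ x, (bdry G par x).ncard ≤ 1)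
    (hT : IsSearchTree G par S r) (hconn : PreconnectedIn G S) (hS : ChildClosed par S r)
    {p : V} (hvp : par v = some p) (hp : p ∈ S) : G.Adj p v := by
  induction hT with
  | node S r ρ hr hρ hsub ih =>
    have hT : IsSearchTree G par S r := .node S r ρ hr hρ hsub
    have hv : v ∈ S := hS.1 v p hvp hp
    have hvr : v ≠ r := by
      rintro rfl
      exact hS.2 p hp hvp
    have hCv := hT.childClosed_compIn hS hv hvr (hρ v hv hvr)
    by_cases hpr : p = r
    · rw [hpr] at hvp ⊢
      have hrC : r ∉ compIn G (S \ {r}) v := notMem_compIn_sdiff hvr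
      have hρv : v = ρ v := (hsub v hv hvr).eq_root_of_parent_notMem
        (mem_compIn_self G _ v) hvp hrC
      obtain ⟨x, hx, hrx⟩ := hconn.exists_adj_compIn hr hv hvr
      have hxv : x = ρ v := (hsub v hv hvr).eq_root_of_adj h1 hCv
        (preconnectedIn_compIn G _ v) hrC hx hrx
      rwa [hxv, ← hρv] at hrx
    · exact ih v hv hvr (preconnectedIn_compIn G _ v) hCv
        (hT.parent_mem_compIn hv hvr hvp hpr)

end IsSearchTree

/-- A 1-cut search tree on a tree `G` is a rooting of `G`: if every node
`v` satisfies `|∂(T_v)| ≤ 1`, then every non-root node is adjacent in `G` to its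
parent. -/
theorem oneCut_is_rooting [Fintype V] (G : SimpleGraph V) (hG : G.IsTree)
    (par : V → Option V) (r : V) (hroot : par r = none)
    (hT : IsSearchTree G par Set.univ r)
    (h1 : ∀ x, (bdry G par x).ncard ≤ 1)
    (v p : V) (hvp : par v = some p) :
    G.Adj v p := by
  have hclosed : ChildClosed par Set.univ r :=
    ⟨fun _ _ _ _ => trivial, fun _ _ h => by simp [hroot] at h⟩
  exact (hT.adj_of_parent_mem h1 (preconnectedIn_univ hG.connected.preconnected) hclosed
    hvp trivial).symm
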